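/- Suppose Λ_n < ∞. Then for every β > Λ_n, the derivative of the normalised partition function satisfies 0 ≤ β ∑_{j=1}^n g_{n,j} exp(−β g_{n,j}) ≤ (β/(β − Λ_n))² − 1; equivalently, 0 ≤ −β Z_n'(β) ≤ (β/(β − Λ_n))² − 1, where Z_n'(β) = −∑_j g_{n,j} e^{−β g_{n,j}}. -/

import Mathlib

open Filter MeasureTheory
open scoped ENNReal

/-- Maximum score `z_n^*`. -/
noncomputable def zmax (n : ℕ) (z : Fin n → ℝ) : ℝ := sSup (Set.range z)

/-- Gap `g_{n,j} = z_n^* - z_{n,j}`. -/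
noncomputable def gap (n : ℕ) (z : Fin n → ℝ) (j : Fin n) : ℝ := zmax n z - z j

/-- Cumulative gap-counting function `N_n(t)`. -/
noncomputable def Ncount (n : ℕ) (z : Fin n → ℝ) (t : ℝ) : ℕ :=
  {j : Fin n | gap n z j ≤ t}.ncard

/-- Normalised partition function `Z_n(β)`. -/
noncomputable def Zfun (n : ℕ) (z : Fin n → ℝ) (β : ℝ) : ℝ :=
  ∑ j : Fin n, Real.exp (-(β * gap n z j))

/-- Softmax probabilities `p_{n,j}(β)`. -/
noncomputable def softmaxP (n : ℕ) (z : Fin n → ℝ) (β : ℝ) (j : Fin n) : ℝ :=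
  Real.exp (β * z j) / ∑ ℓ : Fin n, Real.exp (β * z ℓ)

/-- Shannon entropy `H_n(β)`. -/
noncomputable def entropyH (n : ℕ) (z : Fin n → ℝ) (β : ℝ) : ℝ :=
  -∑ j : Fin n, softmaxP n z β j * Real.log (softmaxP n z β j)

/-- The set of values `log N_n(t) / t` over `t > 0`, whose supremum is `Λ_n`. -/
def lamSet (n : ℕ) (z : Fin n → ℝ) : Set ℝ :=
  {r | ∃ t : ℝ, 0 < t ∧ r = Real.log (Ncount n z t) / t}

/-- Second-largest entry of a finite vector (equals the largest in case of ties). -/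
noncomputable def secondLargest (n : ℕ) (v : Fin n → ℝ) : ℝ :=
  sInf (Set.range fun i => sSup (v '' {j | j ≠ i}))

/-- Top-two weight gap `D_n(β)`. -/
noncomputable def Dgap (n : ℕ) (z : Fin n → ℝ) (β : ℝ) : ℝ :=
  sSup (Set.range (softmaxP n z β)) - secondLargest n (softmaxP n z β)

/-- Rank gap `G_n(β) = max_{i,j} |p_{n,i}(β) - p_{n,j}(β)|`. -/
noncomputable def Ggap (n : ℕ) (z : Fin n → ℝ) (β : ℝ) : ℝ :=
  sSup {x | ∃ i j : Fin n, x = |softmaxP n z β i - softmaxP n z β j|}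

/-- Resolved accumulation scale `Λ_n^{(r)}` (with `sup ∅ = 0`), valued in `ℝ≥0∞`. -/
noncomputable def resolvedLam (n : ℕ) (z : Fin n → ℝ) (r : ℝ) : ℝ≥0∞ :=
  ⨆ t ∈ {t : ℝ | 0 < t ∧ r < Real.log (Ncount n z t)},
    ENNReal.ofReal ((Real.log (Ncount n z t) - r) / t)

/-- Laplace envelope `S_n(β) = sup_{t ≥ 0} (log N_n(t) - β t)`. -/
noncomputable def Sfun (n : ℕ) (z : Fin n → ℝ) (β : ℝ) : ℝ :=
  sSup {x | ∃ t : ℝ, 0 ≤ t ∧ x = Real.log (Ncount n z t) - β * t}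

/-- Rank boundary `B_n^rank(r) = sup {β ≥ 0 : log Z_n(β) ≥ r}`, valued in `ℝ≥0∞`. -/
noncomputable def rankBoundary (n : ℕ) (z : Fin n → ℝ) (r : ℝ) : ℝ≥0∞ :=
  ⨆ β ∈ {β : ℝ | 0 ≤ β ∧ r ≤ Real.log (Zfun n z β)}, ENNReal.ofReal β

/-- `X_n ≍ (log n)^ξ`. -/
def IsLogAsymp (X : ℕ → ℝ) (ξ : ℝ) : Prop :=
  ∃ c₁ c₂ : ℝ, 0 < c₁ ∧ c₁ ≤ c₂ ∧
    ∀ᶠ n : ℕ in Filter.atTop,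
      c₁ * Real.log n ^ ξ ≤ X n ∧ X n ≤ c₂ * Real.log n ^ ξ

/-! Writing `g e^{-βg} = ∫_g^∞ (βt - 1) e^{-βt} dt` and summing over `j` gives
`-Z'(β) = ∫_0^∞ c(t) (βt - 1) e^{-βt} dt` with `c(t) = #{j : g_j < t}`. The top score has
gap `0`, so `1 ≤ c(t) ≤ N(t) ≤ e^{Λt}` for `t > 0`, whence `c(t) (βt - 1) ≤ βt e^{Λt} - 1`
whatever the sign of `βt - 1`. Integrating, `-Z'(β) ≤ β / (β - Λ)² - 1 / β`. -/

open Real Set MeasureTheory Filter Topology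

section ExpIntegrals

variable {b : ℝ}

theorem integrableOn_mul_exp_neg_mul_Ioi (hb : 0 < b) (a : ℝ) :
    IntegrableOn (fun t => t * exp (-(b * t))) (Ioi a) := by
  refine integrable_of_isBigO_exp_neg (half_pos hb) (by fun_prop) ?_
  refine ((isLittleO_pow_exp_pos_mul_atTop 1 (half_pos hb)).isBigO.mul
    (Asymptotics.isBigO_refl (fun t => exp (-(b * t))) atTop)).congr (fun t => by simp) fun t => ?_
  rw [← exp_add]
  ring_nf

theorem integrableOn_mul_sub_one_mul_exp_neg_mul_Ioi (hb : 0 < b) (a : ℝ) :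
    IntegrableOn (fun t => (b * t - 1) * exp (-(b * t))) (Ioi a) := by
  refine IntegrableOn.congr_fun (((integrableOn_mul_exp_neg_mul_Ioi hb a).const_mul b).sub
    (exp_neg_integrableOn_Ioi a hb)) (fun t _ => ?_) measurableSet_Ioi
  simp only [Pi.sub_apply, neg_mul]
  ring

theorem integrable_indicator_Ioi_mul_sub_one_mul_exp_neg_mul (hb : 0 < b) (a : ℝ) :
    Integrable ((Ioi a).indicator fun t => (b * t - 1) * exp (-(b * t))) :=
  (integrable_indicator_iff measurableSet_Ioi).2
    (integrableOn_mul_sub_one_mul_exp_neg_mul_Ioi hb a)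

theorem integral_Ioi_mul_sub_one_mul_exp_neg_mul (hb : 0 < b) (a : ℝ) :
    ∫ t in Ioi a, (b * t - 1) * exp (-(b * t)) = a * exp (-(b * a)) := by
  have hderiv (t : ℝ) : HasDerivAt (fun t => -(t * exp (-(b * t))))
      ((b * t - 1) * exp (-(b * t))) t := by
    have hlin : HasDerivAt (fun t => -(b * t)) (-b) t := by
      simpa using ((hasDerivAt_id t).const_mul b).fun_neg
    exact ((hasDerivAt_id t).fun_mul hlin.exp).fun_neg.congr_deriv (by simp only [id_eq]; ring)
  have hlim : Tendsto (fun t => -(t * exp (-(b * t)))) atTop (𝓝 0) := by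
    simpa using (tendsto_rpow_mul_exp_neg_mul_atTop_nhds_zero 1 b hb).neg
  rw [integral_Ioi_of_hasDerivAt_of_tendsto' (fun t _ => hderiv t)
    (integrableOn_mul_sub_one_mul_exp_neg_mul_Ioi hb a) hlim]
  ring

theorem integral_Ioi_zero_mul_exp_neg_mul (hb : 0 < b) :
    ∫ t in Ioi 0, t * exp (-(b * t)) = 1 / b ^ 2 := by
  have := integral_rpow_mul_exp_neg_mul_Ioi two_pos hb
  norm_num [Gamma_two] at this
  simpa using this

theorem integral_Ioi_zero_exp_neg_mul (hb : 0 < b) :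
    ∫ t in Ioi 0, exp (-(b * t)) = 1 / b := by
  simpa [field] using integral_exp_mul_Ioi (neg_neg_of_pos hb) 0

end ExpIntegrals

theorem mul_sub_one_le_mul_sub_one {c A x : ℝ} (hc : 1 ≤ c) (hcA : c ≤ A) (hx : 0 ≤ x) :
    c * (x - 1) ≤ x * A - 1 := by
  rcases le_total 1 x with h1x | hx1
  · nlinarith [mul_le_mul_of_nonneg_right hcA (sub_nonneg.2 h1x)]
  · nlinarith

section LayerCake

variable {ι : Type*} [Fintype ι] {β Λ : ℝ}

theorem sum_indicator_Ioi_apply (g : ι → ℝ) (f : ℝ → ℝ) (t : ℝ) :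
    ∑ j, (Ioi (g j)).indicator f t = (Finset.univ.filter fun j => g j < t).card * f t := by
  simp only [indicator_apply, mem_Ioi]
  rw [Finset.sum_ite, Finset.sum_const, Finset.sum_const_zero, add_zero, nsmul_eq_mul]

theorem sum_mul_exp_neg_mul_eq_integral {g : ι → ℝ} (hg : ∀ j, 0 ≤ g j) (hβ : 0 < β) :
    ∑ j, g j * exp (-(β * g j)) =
      ∫ t in Ioi 0, ∑ j, (Ioi (g j)).indicator (fun t => (β * t - 1) * exp (-(β * t))) t := by
  rw [integral_finsetSum _ fun j _ =>
    (integrable_indicator_Ioi_mul_sub_one_mul_exp_neg_mul hβ (g j)).integrableOn]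
  refine Finset.sum_congr rfl fun j _ => ?_
  rw [setIntegral_indicator measurableSet_Ioi, Ioi_inter_Ioi, sup_eq_right.2 (hg j),
    integral_Ioi_mul_sub_one_mul_exp_neg_mul hβ]

theorem sum_mul_exp_neg_mul_le {g : ι → ℝ} (hg : ∀ j, 0 ≤ g j) (hg₀ : ∃ j, g j = 0)
    (hβ : 0 < β) (hΛβ : Λ < β)
    (hcount : ∀ t > 0, ((Finset.univ.filter fun j => g j ≤ t).card : ℝ) ≤ exp (Λ * t)) :
    β * ∑ j, g j * exp (-(β * g j)) ≤ (β / (β - Λ)) ^ 2 - 1 := by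
  have hs : 0 < β - Λ := sub_pos.2 hΛβ
  obtain ⟨j₀, hj₀⟩ := hg₀
  have hbound : ∀ t ∈ Ioi (0 : ℝ),
      ∑ j, (Ioi (g j)).indicator (fun t => (β * t - 1) * exp (-(β * t))) t ≤
        β * (t * exp (-((β - Λ) * t))) - exp (-(β * t)) := by
    intro t (ht : 0 < t)
    rw [sum_indicator_Ioi_apply]
    set c : ℕ := (Finset.univ.filter fun j => g j < t).card
    have hc₁ : (1 : ℝ) ≤ c := by
      exact_mod_cast Finset.card_pos.2 ⟨j₀, by simp [hj₀, ht]⟩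
    have hcA : (c : ℝ) ≤ exp (Λ * t) :=
      (Nat.cast_le.2 (Finset.card_le_card (Finset.monotone_filter_right _
        fun _ _ => le_of_lt))).trans (hcount t ht)
    calc c * ((β * t - 1) * exp (-(β * t))) = c * (β * t - 1) * exp (-(β * t)) := by ring
      _ ≤ (β * t * exp (Λ * t) - 1) * exp (-(β * t)) := by
        gcongr
        exact mul_sub_one_le_mul_sub_one hc₁ hcA (by positivity)
      _ = β * (t * exp (-((β - Λ) * t))) - exp (-(β * t)) := by
        rw [sub_mul, mul_assoc, ← exp_add]
        ring_nf
  have hexp : IntegrableOn (fun t => exp (-(β * t))) (Ioi 0) := by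
    simpa only [neg_mul] using exp_neg_integrableOn_Ioi 0 hβ
  have hlin := (integrableOn_mul_exp_neg_mul_Ioi hs 0).const_mul β
  calc β * ∑ j, g j * exp (-(β * g j))
      ≤ β * ∫ t in Ioi 0, (β * (t * exp (-((β - Λ) * t))) - exp (-(β * t))) := by
        rw [sum_mul_exp_neg_mul_eq_integral hg hβ]
        refine mul_le_mul_of_nonneg_left ?_ hβ.le
        exact setIntegral_mono_on (integrable_finsetSum _ fun j _ =>
          (integrable_indicator_Ioi_mul_sub_one_mul_exp_neg_mul hβ (g j)).integrableOn)
          (hlin.sub hexp) measurableSet_Ioi hbound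
    _ = (β / (β - Λ)) ^ 2 - 1 := by
      rw [integral_sub hlin hexp, integral_const_mul,
        integral_Ioi_zero_mul_exp_neg_mul hs, integral_Ioi_zero_exp_neg_mul hβ]
      field_simp

end LayerCake

section PartitionFunction

variable {n : ℕ}

theorem gap_nonneg (z : Fin n → ℝ) (j : Fin n) : 0 ≤ gap n z j :=
  sub_nonneg.2 (le_csSup (finite_range z).bddAbove (mem_range_self j))

theorem exists_gap_eq_zero [NeZero n] (z : Fin n → ℝ) : ∃ j, gap n z j = 0 := by
  obtain ⟨j, hj⟩ := (range_nonempty z).csSup_mem (finite_range z)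
  exact ⟨j, sub_eq_zero.2 hj.symm⟩

theorem Ncount_eq_card (z : Fin n → ℝ) (t : ℝ) :
    Ncount n z t = (Finset.univ.filter fun j => gap n z j ≤ t).card := by
  rw [Ncount, ← Set.ncard_coe_finset, Finset.coe_filter_univ]

theorem nonneg_of_isLUB_lamSet {z : Fin n → ℝ} {Λ : ℝ} (hΛ : IsLUB (lamSet n z) Λ) :
    0 ≤ Λ :=
  (log_natCast_nonneg _).trans (by simpa using hΛ.1 ⟨1, one_pos, rfl⟩)

theorem Ncount_le_exp_of_isLUB_lamSet {z : Fin n → ℝ} {Λ : ℝ} (hΛ : IsLUB (lamSet n z) Λ)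
    {t : ℝ} (ht : 0 < t) :
    (Ncount n z t : ℝ) ≤ exp (Λ * t) :=
  (le_exp_log _).trans (exp_le_exp.2 ((div_le_iff₀ ht).1 (hΛ.1 ⟨t, ht, rfl⟩)))

theorem hasDerivAt_Zfun (z : Fin n → ℝ) (β : ℝ) :
    HasDerivAt (Zfun n z) (-∑ j, gap n z j * exp (-(β * gap n z j))) β := by
  have hterm (j : Fin n) : HasDerivAt (fun b => exp (-(b * gap n z j)))
      (-(gap n z j * exp (-(β * gap n z j)))) β := by
    have hlin : HasDerivAt (fun b => -(b * gap n z j)) (-gap n z j) β := by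
      simpa using ((hasDerivAt_id β).mul_const (gap n z j)).fun_neg
    exact hlin.exp.congr_deriv (by ring)
  rw [← Finset.sum_neg_distrib]
  exact HasDerivAt.fun_sum fun j _ => hterm j

end PartitionFunction

theorem stmt7 (n : ℕ) (hn : 2 ≤ n) (z : Fin n → ℝ) (Λ β : ℝ)
    (hΛ : IsLUB (lamSet n z) Λ) (hβ : Λ < β) :
    HasDerivAt (fun b => Zfun n z b)
      (-(∑ j : Fin n, gap n z j * Real.exp (-(β * gap n z j)))) β ∧
    0 ≤ β * ∑ j : Fin n, gap n z j * Real.exp (-(β * gap n z j)) ∧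
    β * ∑ j : Fin n, gap n z j * Real.exp (-(β * gap n z j)) ≤ (β / (β - Λ)) ^ 2 - 1 := by
  have : NeZero n := ⟨by omega⟩
  have hβ₀ : 0 < β := (nonneg_of_isLUB_lamSet hΛ).trans_lt hβ
  refine ⟨hasDerivAt_Zfun z β, ?_, ?_⟩
  · exact mul_nonneg hβ₀.le
      (Finset.sum_nonneg fun j _ => mul_nonneg (gap_nonneg z j) (exp_pos _).le)
  · refine sum_mul_exp_neg_mul_le (gap_nonneg z) (exists_gap_eq_zero z) hβ₀ hβ fun t ht => ?_
    rw [← Ncount_eq_card]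
    exact Ncount_le_exp_of_isLUB_lamSet hΛ ht
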